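/- arXiv:1206.1480 — 4 statements merged into one kernel-verified Lean document; each statement's English description precedes it below -/
import Mathlib

section
/- Let v₁⁰, v₂⁰, v₃⁰ be positive reals with v₂⁰ ≥ v₃⁰, and define V : ℝ → ℝ by V(v₁) = v₁ + (v₁⁰·v₂⁰)/v₁ + (v₃⁰/v₁⁰)·v₁ for v₁ ≤ v₁⁰, and V(v₁) = v₁ + (v₁⁰·v₂⁰)/v₁ + (v₁⁰·v₃⁰)/v₁ for v₁ ≥ v₁⁰. Then V has a local maximum at v₁⁰ (i.e., V(v₁) ≤ V(v₁⁰) for all v₁ > 0 in some neighbourhood of v₁⁰) if and only if the strict triangular inequalities v₂⁰ − v₃⁰ < v₁⁰ < v₂⁰ + v₃⁰ hold. -/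
open Topology Filter


/-- Case I of the main theorem (three cusps): the total peripheral volume `V` has a local
maximum at `v₁⁰` (among positive parameters) iff the strict triangular inequalities
`v₂⁰ − v₃⁰ < v₁⁰ < v₂⁰ + v₃⁰` hold. -/
theorem caseI_localMax_iff_triangular (v₁ v₂ v₃ : ℝ)
    (h₁ : 0 < v₁) (h₂ : 0 < v₂) (h₃ : 0 < v₃) (h₂₃ : v₃ ≤ v₂)
    (V : ℝ → ℝ)
    (hVle : ∀ v ≤ v₁, V v = v + v₁ * v₂ / v + v₃ / v₁ * v)
    (hVge : ∀ v ≥ v₁, V v = v + v₁ * v₂ / v + v₁ * v₃ / v) :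
    IsLocalMaxOn V (Set.Ioi (0 : ℝ)) v₁ ↔ (v₂ - v₃ < v₁ ∧ v₁ < v₂ + v₃) := by
  have hV1 : V v₁ = v₁ + v₂ + v₃ := by
    rw [hVle v₁ le_rfl]; field_simp
  have key_le : ∀ x : ℝ, 0 < x → x ≤ v₁ →
      V x - V v₁ = (x - v₁) * (x * (v₁ + v₃) - v₁ * v₂) / (v₁ * x) := by
    intro x hx hxle
    rw [hVle x hxle, hV1]
    field_simp
    ring
  have key_ge : ∀ x : ℝ, v₁ ≤ x →
      V x - V v₁ = (x - v₁) * (x - (v₂ + v₃)) / x := by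
    intro x hxge
    have hx : 0 < x := lt_of_lt_of_le h₁ hxge
    rw [hVge x hxge, hV1]
    field_simp
    ring
  constructor
  · intro h
    constructor
    · by_contra hc
      push_neg at hc
      -- v₁ ≤ v₂ - v₃, i.e. v₁ + v₃ ≤ v₂
      have hne : (𝓝[Set.Ioo (0:ℝ) v₁] v₁).NeBot := by
        rw [← mem_closure_iff_nhdsWithin_neBot, closure_Ioo h₁.ne]
        exact Set.right_mem_Icc.mpr h₁.le
      have hmono : 𝓝[Set.Ioo (0:ℝ) v₁] v₁ ≤ 𝓝[Set.Ioi (0:ℝ)] v₁ :=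
        nhdsWithin_mono _ (fun x hx => hx.1)
      have h' : ∀ᶠ x in 𝓝[Set.Ioo (0:ℝ) v₁] v₁, V x ≤ V v₁ := h.filter_mono hmono
      have h'' : ∀ᶠ x in 𝓝[Set.Ioo (0:ℝ) v₁] v₁, V v₁ < V x := by
        filter_upwards [self_mem_nhdsWithin] with x hx
        have hid := key_le x hx.1 hx.2.le
        have hnum : 0 < (x - v₁) * (x * (v₁ + v₃) - v₁ * v₂) := by
          have hfac : x * (v₁ + v₃) - v₁ * v₂ < 0 := by nlinarith [hx.2, hx.1]
          have : x - v₁ < 0 := by linarith [hx.2]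
          exact mul_pos_of_neg_of_neg this hfac
        have hden : 0 < v₁ * x := mul_pos h₁ hx.1
        have : 0 < V x - V v₁ := hid ▸ div_pos hnum hden
        linarith
      obtain ⟨x, hx1, hx2⟩ := (h'.and h'').exists
      linarith
    · by_contra hc
      push_neg at hc
      -- v₂ + v₃ ≤ v₁
      have hne : (𝓝[Set.Ioi v₁] v₁).NeBot := nhdsGT_neBot v₁
      have hmono : 𝓝[Set.Ioi v₁] v₁ ≤ 𝓝[Set.Ioi (0:ℝ)] v₁ :=
        nhdsWithin_mono _ (fun x hx => lt_trans h₁ hx)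
      have h' : ∀ᶠ x in 𝓝[Set.Ioi v₁] v₁, V x ≤ V v₁ := h.filter_mono hmono
      have h'' : ∀ᶠ x in 𝓝[Set.Ioi v₁] v₁, V v₁ < V x := by
        filter_upwards [self_mem_nhdsWithin] with x hx
        have hxgt : v₁ < x := hx
        have hid := key_ge x hxgt.le
        have hnum : 0 < (x - v₁) * (x - (v₂ + v₃)) := by
          have : 0 < x - v₁ := by linarith
          have : 0 < x - (v₂ + v₃) := by linarith
          nlinarith
        have : 0 < V x - V v₁ := hid ▸ div_pos hnum (lt_trans h₁ hxgt)
        linarith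
      obtain ⟨x, hx1, hx2⟩ := (h'.and h'').exists
      linarith
  · rintro ⟨hL, hR⟩
    -- neighbourhood (v₁*v₂/(v₁+v₃), v₂+v₃)
    have h13 : 0 < v₁ + v₃ := by linarith
    have hLlt : v₁ * v₂ / (v₁ + v₃) < v₁ := by
      rw [div_lt_iff₀ h13]; nlinarith
    have hmem : Set.Ioo (v₁ * v₂ / (v₁ + v₃)) (v₂ + v₃) ∈ 𝓝 v₁ :=
      Ioo_mem_nhds hLlt hR
    have hgoal : ∀ᶠ x in 𝓝[Set.Ioi (0:ℝ)] v₁, V x ≤ V v₁ := by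
      filter_upwards [mem_nhdsWithin_of_mem_nhds hmem, self_mem_nhdsWithin] with x hx hx0
      have hx0' : (0:ℝ) < x := hx0
      rcases le_total x v₁ with hle | hge
      · have hid := key_le x hx0' hle
        have hnum : (x - v₁) * (x * (v₁ + v₃) - v₁ * v₂) ≤ 0 := by
          have hfac : 0 ≤ x * (v₁ + v₃) - v₁ * v₂ := by
            have := (div_lt_iff₀ h13).mp hx.1
            nlinarith
          have : x - v₁ ≤ 0 := by linarith
          exact mul_nonpos_of_nonpos_of_nonneg this hfac
        have hden : 0 < v₁ * x := mul_pos h₁ hx0'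
        have : V x - V v₁ ≤ 0 := hid ▸ div_nonpos_of_nonpos_of_nonneg hnum hden.le
        linarith
      · have hid := key_ge x hge
        have hnum : (x - v₁) * (x - (v₂ + v₃)) ≤ 0 := by
          have h1 : 0 ≤ x - v₁ := by linarith
          have h2 : x - (v₂ + v₃) ≤ 0 := by linarith [hx.2]
          exact mul_nonpos_of_nonneg_of_nonpos h1 h2
        have : V x - V v₁ ≤ 0 :=
          hid ▸ div_nonpos_of_nonpos_of_nonneg hnum hx0'.le
        linarith
    exact hgoal
end

section
/- Let A > 0, A₂ ≥ A₃ > 0 and d₁⁰ > 0 be reals, set ṽ₁⁰ = (A/4)·(1 + cosh(2d₁⁰)), v₂⁰ = (A₂/2)·exp(−2d₁⁰), v₃⁰ = (A₃/2)·exp(−2d₁⁰), and define V : ℝ → ℝ by V(d₁) = (A/4)·(2d₁ + sinh(2d₁)) + (A₂/2)·exp(−2d₁) + (A₃/2)·exp(2d₁ − 4d₁⁰) for d₁ ≤ d₁⁰, and V(d₁) = (A/4)·(2d₁ + sinh(2d₁)) + (A₂/2)·exp(−2d₁) + (A₃/2)·exp(−2d₁) for d₁ ≥ d₁⁰. Then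 V has a local maximum at d₁⁰ if and only if the strict triangular inequalities v₂⁰ − v₃⁰ < ṽ₁⁰ < v₂⁰ + v₃⁰ hold. -/
/-!
On each side of `d₁` the volume `V` agrees with a function of the form
`A/4 (2x + sinh 2x) + B/2 e^{-2x} + C/2 e^{2x}` with `A > 0` and `B, C ≥ 0`, which is strictly
convex on `[0, ∞)`. For a strictly convex branch, `d₁` is a one-sided local maximum from the left
iff the left derivative is positive, and from the right iff the right derivative is negative: with
a non-strict sign, convexity makes the branch grow away from `d₁`. The left and right derivatives
at `d₁` are `2 (ṽ₁⁰ - v₂⁰ + v₃⁰)` and `2 (ṽ₁⁰ - v₂⁰ - v₃⁰)`.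
-/

open Filter Set Topology Real

theorem isLocalMax_iff_isLocalMaxOn_Iic_and_Ici {α β : Type*} [TopologicalSpace α] [LinearOrder α]
    [OrderTopology α] [Preorder β] {f : α → β} {a : α} :
    IsLocalMax f a ↔ IsLocalMaxOn f (Iic a) a ∧ IsLocalMaxOn f (Ici a) a := by
  simp only [IsLocalMax, IsLocalMaxOn, IsMaxFilter, ← eventually_sup, nhdsLE_sup_nhdsGE]

section OneSided

variable {f : ℝ → ℝ} {s : Set ℝ} {a f' : ℝ}

theorem HasDerivWithinAt.isLocalMaxOn_Iic_of_pos (hf : HasDerivWithinAt f f' (Iio a) a)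
    (hpos : 0 < f') : IsLocalMaxOn f (Iic a) a := by
  have hslope : ∀ᶠ x in 𝓝[<] a, 0 < slope f a x := by
    have := (hasDerivWithinAt_iff_tendsto_slope.mp hf).eventually (eventually_gt_nhds hpos)
    rwa [sdiff_singleton_eq_self self_notMem_Iio] at this
  rw [IsLocalMaxOn, IsMaxFilter, ← Iio_insert, nhdsWithin_insert, eventually_sup]
  refine ⟨le_refl (f a), ?_⟩
  filter_upwards [hslope, self_mem_nhdsWithin] with x hx (hxa : x < a)
  exact ((slope_pos_iff_gt hxa).mp hx).le

theorem HasDerivWithinAt.isLocalMaxOn_Ici_of_neg (hf : HasDerivWithinAt f f' (Ioi a) a)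
    (hneg : f' < 0) : IsLocalMaxOn f (Ici a) a := by
  have hslope : ∀ᶠ x in 𝓝[>] a, slope f a x < 0 := by
    have := (hasDerivWithinAt_iff_tendsto_slope.mp hf).eventually (eventually_lt_nhds hneg)
    rwa [sdiff_singleton_eq_self self_notMem_Ioi] at this
  rw [IsLocalMaxOn, IsMaxFilter, ← Ioi_insert, nhdsWithin_insert, eventually_sup]
  refine ⟨le_refl (f a), ?_⟩
  filter_upwards [hslope, self_mem_nhdsWithin] with x hx (hax : a < x)
  exact ((slope_neg_iff_of_le hax.le).mp hx).le

theorem StrictConvexOn.isLocalMaxOn_Iic_iff (hfc : StrictConvexOn ℝ s f) (hs : s ∈ 𝓝[≤] a)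
    (hf : HasDerivWithinAt f f' (Iio a) a) : IsLocalMaxOn f (Iic a) a ↔ 0 < f' := by
  refine ⟨fun hmax => ?_, hf.isLocalMaxOn_Iic_of_pos⟩
  by_contra! hf'
  have hleft : 𝓝[<] a ≤ 𝓝[≤] a := nhdsWithin_mono _ Iio_subset_Iic_self
  have hmax' : ∀ᶠ x in 𝓝[<] a, f x ≤ f a := hleft hmax
  have hs' : ∀ᶠ x in 𝓝[<] a, x ∈ s := hleft hs
  obtain ⟨x, hxmax, hxs, hxa⟩ := (hmax'.and (hs'.and self_mem_nhdsWithin)).exists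
  have hlt :=
    hfc.slope_lt_of_hasDerivWithinAt_Iio hxs (mem_of_mem_nhdsWithin self_mem_Iic hs) hxa hf
  have hnonneg := (slope_nonneg_iff_of_le hxa.le).mpr hxmax
  linarith

theorem StrictConvexOn.isLocalMaxOn_Ici_iff (hfc : StrictConvexOn ℝ s f) (hs : s ∈ 𝓝[≥] a)
    (hf : HasDerivWithinAt f f' (Ioi a) a) : IsLocalMaxOn f (Ici a) a ↔ f' < 0 := by
  refine ⟨fun hmax => ?_, hf.isLocalMaxOn_Ici_of_neg⟩
  by_contra! hf'
  have hright : 𝓝[>] a ≤ 𝓝[≥] a := nhdsWithin_mono _ Ioi_subset_Ici_self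
  have hmax' : ∀ᶠ x in 𝓝[>] a, f x ≤ f a := hright hmax
  have hs' : ∀ᶠ x in 𝓝[>] a, x ∈ s := hright hs
  obtain ⟨x, hxmax, hxs, hax⟩ := (hmax'.and (hs'.and self_mem_nhdsWithin)).exists
  have hlt :=
    hfc.lt_slope_of_hasDerivWithinAt_Ioi (mem_of_mem_nhdsWithin self_mem_Ici hs) hxs hax hf
  have hnonpos := (slope_nonpos_iff_of_le hax.le).mpr hxmax
  linarith

end OneSided

theorem isLocalMax_iff_of_strictConvexOn_Iic_Ici {V f g : ℝ → ℝ} {s t : Set ℝ} {a f' g' : ℝ}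
    (hfc : StrictConvexOn ℝ s f) (hs : s ∈ 𝓝[≤] a) (hf : HasDerivWithinAt f f' (Iio a) a)
    (hgc : StrictConvexOn ℝ t g) (ht : t ∈ 𝓝[≥] a) (hg : HasDerivWithinAt g g' (Ioi a) a)
    (hVf : EqOn V f (Iic a)) (hVg : EqOn V g (Ici a)) :
    IsLocalMax V a ↔ 0 < f' ∧ g' < 0 := by
  rw [isLocalMax_iff_isLocalMaxOn_Iic_and_Ici,
    (hVf.eventuallyEq_nhdsWithin).isLocalMaxOn_iff self_mem_Iic,
    (hVg.eventuallyEq_nhdsWithin).isLocalMaxOn_iff self_mem_Ici,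
    hfc.isLocalMaxOn_Iic_iff hs hf, hgc.isLocalMaxOn_Ici_iff ht hg]

noncomputable def collarCuspVolume (A B C x : ℝ) : ℝ :=
  A / 4 * (2 * x + sinh (2 * x)) + B / 2 * exp (-2 * x) + C / 2 * exp (2 * x)

theorem hasDerivAt_collarCuspVolume (A B C x : ℝ) :
    HasDerivAt (collarCuspVolume A B C)
      (A / 2 * (1 + cosh (2 * x)) - B * exp (-2 * x) + C * exp (2 * x)) x := by
  have h2x : HasDerivAt (fun x : ℝ => 2 * x) 2 x := by
    simpa using (hasDerivAt_id x).const_mul 2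
  have hm2x : HasDerivAt (fun x : ℝ => -2 * x) (-2) x := by
    simpa using (hasDerivAt_id x).const_mul (-2)
  refine ((((h2x.add h2x.sinh).const_mul (A / 4)).add (hm2x.exp.const_mul (B / 2))).add
    (h2x.exp.const_mul (C / 2))).congr_deriv ?_
  ring

theorem strictConvexOn_collarCuspVolume {A B C : ℝ} (hA : 0 < A) (hB : 0 ≤ B) (hC : 0 ≤ C) :
    StrictConvexOn ℝ (Ici 0) (collarCuspVolume A B C) := by
  refine StrictMonoOn.strictConvexOn_of_deriv (convex_Ici 0)
    (fun x _ => (hasDerivAt_collarCuspVolume A B C x).continuousAt.continuousWithinAt) ?_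
  rw [interior_Ici, funext fun x => (hasDerivAt_collarCuspVolume A B C x).deriv]
  intro x (hx : 0 < x) y (hy : 0 < y) hxy
  have hcosh : cosh (2 * x) < cosh (2 * y) :=
    cosh_strictMonoOn (mem_Ici.mpr (by linarith)) (mem_Ici.mpr (by linarith)) (by linarith)
  have hexp_neg : B * exp (-2 * y) ≤ B * exp (-2 * x) :=
    mul_le_mul_of_nonneg_left (exp_le_exp.mpr (by linarith)) hB
  have hexp_pos : C * exp (2 * x) ≤ C * exp (2 * y) :=
    mul_le_mul_of_nonneg_left (exp_le_exp.mpr (by linarith)) hC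
  have := mul_lt_mul_of_pos_left hcosh (half_pos hA)
  linarith

/-- Case II of the main theorem (one boundary component and two cusps): the total
peripheral volume `V` has a local maximum at `d₁⁰` iff the strict triangular
inequalities `v₂⁰ − v₃⁰ < vt₁⁰ < v₂⁰ + v₃⁰` hold. -/
theorem caseII_localMax_iff_triangular (A A₂ A₃ d₁ vt₁ v₂ v₃ : ℝ)
    (hA : 0 < A) (hA₃ : 0 < A₃) (hA₂₃ : A₃ ≤ A₂) (hd₁ : 0 < d₁)
    (hvt₁ : vt₁ = A / 4 * (1 + Real.cosh (2 * d₁)))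
    (hv₂ : v₂ = A₂ / 2 * Real.exp (-2 * d₁))
    (hv₃ : v₃ = A₃ / 2 * Real.exp (-2 * d₁))
    (V : ℝ → ℝ)
    (hVle : ∀ d ≤ d₁, V d = A / 4 * (2 * d + Real.sinh (2 * d)) +
      A₂ / 2 * Real.exp (-2 * d) + A₃ / 2 * Real.exp (2 * d - 4 * d₁))
    (hVge : ∀ d ≥ d₁, V d = A / 4 * (2 * d + Real.sinh (2 * d)) +
      A₂ / 2 * Real.exp (-2 * d) + A₃ / 2 * Real.exp (-2 * d)) :
    IsLocalMax V d₁ ↔ (v₂ - v₃ < vt₁ ∧ vt₁ < v₂ + v₃) := by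
  have hleft : EqOn V (collarCuspVolume A A₂ (A₃ * exp (-4 * d₁))) (Iic d₁) := fun d hd => by
    rw [hVle d hd, collarCuspVolume, show 2 * d - 4 * d₁ = -4 * d₁ + 2 * d by ring, exp_add]
    ring
  have hright : EqOn V (collarCuspVolume A (A₂ + A₃) 0) (Ici d₁) := fun d hd => by
    rw [hVge d hd, collarCuspVolume]
    ring
  have hnhds : Ici 0 ∈ 𝓝 d₁ := Ici_mem_nhds hd₁
  rw [isLocalMax_iff_of_strictConvexOn_Iic_Ici
    (strictConvexOn_collarCuspVolume hA (by linarith) (by positivity))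
    (mem_nhdsWithin_of_mem_nhds hnhds) (hasDerivAt_collarCuspVolume _ _ _ d₁).hasDerivWithinAt
    (strictConvexOn_collarCuspVolume hA (by linarith) le_rfl)
    (mem_nhdsWithin_of_mem_nhds hnhds) (hasDerivAt_collarCuspVolume _ _ _ d₁).hasDerivWithinAt
    hleft hright]
  have hexp : A₃ * exp (-4 * d₁) * exp (2 * d₁) = A₃ * exp (-2 * d₁) := by
    rw [mul_assoc, ← exp_add]
    ring_nf
  subst hvt₁ hv₂ hv₃
  constructor <;> rintro ⟨h₁, h₂⟩ <;> constructor <;> linarith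
end

section
/- Let A₂, A₃, B₂, B₃ > 0 and d₂⁰, d₃⁰ > 0 be reals with (B₂/2)·exp(−2d₂⁰) = (B₃/2)·exp(−2d₃⁰) =: v₁⁰, define f_j(t) = (A_j/4)·(2t + sinh(2t)) and d_j(v) = −(1/2)·log(2v/B_j) for j = 2, 3, set ṽ_j⁰ = (A_j/4)·(1 + cosh(2d_j⁰)) and assume ṽ₂⁰ ≥ ṽ₃⁰. Define V on (0, ∞) by V(v₁) = v₁ + f₂(d₂(v₁)) + f₃(d₃⁰ + d₂⁰ − d₂(v₁)) for v₁ ≤ v₁⁰, and V(v₁) = v₁ + f₂(d₂(v₁)) + f₃(d₃(v₁)) for v₁ ≥ v₁⁰. Then V has a local maximum at v₁⁰ (V(v₁) ≤ V(v₁⁰) for all v₁ > 0 in some neighbourhood of v₁⁰) if and only if the strict triangular inequalities ṽ₂⁰ − ṽ₃⁰ < v₁⁰ < ṽ₂⁰ + ṽ₃⁰ hold. -/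
/-!
In the coordinate `s = ½ log (v / v₁⁰)` the collar widths move affinely, `d₂ = d₂⁰ - s` and
`d₃ = d₃⁰ ± s`, so each branch of `V` is `v₁⁰ e^{2s}` plus collar volumes at nonnegative widths
that move linearly in `s`. The collar volume has derivative twice the modified volume, which is
increasing on `[0, ∞)`, so both branches are strictly convex near `s = 0`. For a function glued
from two strictly convex pieces, a local maximum at the junction is equivalent to a positive left
derivative and a negative right derivative (strictness rules out the boundary cases of equality),
and these one-sided derivatives are `2 (v₁⁰ - ṽ₂⁰ + ṽ₃⁰)` and `2 (v₁⁰ - ṽ₂⁰ - ṽ₃⁰)`.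
-/

open Real Set Filter Topology

namespace HasDerivAt

variable {f : ℝ → ℝ} {f' a : ℝ}

theorem eventually_nhdsLT_lt (hf : HasDerivAt f f' a) (hf' : 0 < f') :
    ∀ᶠ x in 𝓝[<] a, f x < f a := by
  filter_upwards [(hasDerivAt_iff_tendsto_slope_left_right.1 hf).1.eventually
    (eventually_gt_nhds hf'), self_mem_nhdsWithin] with x hslope (hxa : x < a)
  rw [slope_def_field, lt_div_iff_of_neg (sub_neg.2 hxa)] at hslope
  linarith

theorem eventually_nhdsGT_lt (hf : HasDerivAt f f' a) (hf' : f' < 0) :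
    ∀ᶠ x in 𝓝[>] a, f x < f a := by
  filter_upwards [(hasDerivAt_iff_tendsto_slope_left_right.1 hf).2.eventually
    (eventually_lt_nhds hf'), self_mem_nhdsWithin] with x hslope (hax : a < x)
  rw [slope_def_field, div_lt_iff₀ (sub_pos.2 hax)] at hslope
  linarith

end HasDerivAt

namespace StrictConvexOn

variable {S : Set ℝ} {f : ℝ → ℝ} {f' x y : ℝ}

theorem lt_of_hasDerivAt_nonpos (hf : StrictConvexOn ℝ S f) (hx : x ∈ S) (hy : y ∈ S)
    (hxy : x < y) (hf' : HasDerivAt f f' y) (h0 : f' ≤ 0) : f y < f x := by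
  have hslope := hf.slope_lt_of_hasDerivAt hx hy hxy hf'
  rw [slope_def_field, div_lt_iff₀ (sub_pos.2 hxy)] at hslope
  nlinarith

theorem lt_of_hasDerivAt_nonneg (hf : StrictConvexOn ℝ S f) (hx : x ∈ S) (hy : y ∈ S)
    (hxy : x < y) (hf' : HasDerivAt f f' x) (h0 : 0 ≤ f') : f x < f y := by
  have hslope := hf.lt_slope_of_hasDerivAt hx hy hxy hf'
  rw [slope_def_field, lt_div_iff₀ (sub_pos.2 hxy)] at hslope
  nlinarith

end StrictConvexOn

theorem strictConvexOn_of_hasDerivAt {D : Set ℝ} (hD : Convex ℝ D) {f f' : ℝ → ℝ}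
    (hf : ∀ x, HasDerivAt f (f' x) x) (hf' : StrictMonoOn f' D) : StrictConvexOn ℝ D f :=
  StrictMonoOn.strictConvexOn_of_deriv hD
    (fun x _ ↦ (hf x).continuousAt.continuousWithinAt)
    (by rw [deriv_eq hf]; exact hf'.mono interior_subset)

theorem isLocalMax_iff_of_strictConvexOn_Icc {f L R : ℝ → ℝ} {a b c L' R' : ℝ}
    (hba : b < a) (hac : a < c) (hL : StrictConvexOn ℝ (Icc b a) L)
    (hR : StrictConvexOn ℝ (Icc a c) R) (hfL : EqOn f L (Icc b a)) (hfR : EqOn f R (Icc a c))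
    (hL' : HasDerivAt L L' a) (hR' : HasDerivAt R R' a) :
    IsLocalMax f a ↔ 0 < L' ∧ R' < 0 := by
  have ha_left : a ∈ Icc b a := right_mem_Icc.2 hba.le
  have ha_right : a ∈ Icc a c := left_mem_Icc.2 hac.le
  constructor
  · intro hmax
    constructor
    · by_contra! hL'0
      obtain ⟨x, hfx, hx⟩ := ((hmax.filter_mono nhdsWithin_le_nhds).and
        (Ico_mem_nhdsLT hba)).exists
      have hx' : x ∈ Icc b a := Ico_subset_Icc_self hx
      have := hL.lt_of_hasDerivAt_nonpos hx' ha_left hx.2 hL' hL'0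
      rw [← hfL hx', ← hfL ha_left] at this
      linarith
    · by_contra! hR'0
      obtain ⟨x, hfx, hx⟩ := ((hmax.filter_mono nhdsWithin_le_nhds).and
        (Ioc_mem_nhdsGT hac)).exists
      have hx' : x ∈ Icc a c := Ioc_subset_Icc_self hx
      have := hR.lt_of_hasDerivAt_nonneg ha_right hx' hx.1 hR' hR'0
      rw [← hfR hx', ← hfR ha_right] at this
      linarith
  · rintro ⟨hL'0, hR'0⟩
    change ∀ᶠ x in 𝓝 a, f x ≤ f a
    rw [← nhdsNE_sup_pure, ← nhdsLT_sup_nhdsGT, eventually_sup, eventually_sup]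
    refine ⟨⟨?_, ?_⟩, eventually_pure.2 le_rfl⟩
    · filter_upwards [hL'.eventually_nhdsLT_lt hL'0, Ioc_mem_nhdsLT hba] with x hx hxI
      rw [hfL (Ioc_subset_Icc_self hxI), hfL ha_left]
      exact hx.le
    · filter_upwards [hR'.eventually_nhdsGT_lt hR'0, Ico_mem_nhdsGT hac] with x hx hxI
      rw [hfR (Ico_subset_Icc_self hxI), hfR ha_right]
      exact hx.le

theorem isLocalMaxOn_Ioi_iff_isLocalMax_mul_exp {V : ℝ → ℝ} {c : ℝ} (hc : 0 < c) :
    IsLocalMaxOn V (Ioi 0) c ↔ IsLocalMax (fun s ↦ V (c * exp (2 * s))) 0 := by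
  constructor
  · intro h
    have hV : IsLocalMax V (c * exp (2 * 0)) := by
      simpa using h.isLocalMax (Ioi_mem_nhds hc)
    exact hV.comp_continuous (g := fun s ↦ c * exp (2 * s)) (by fun_prop)
  · intro h
    have hlog : ContinuousAt (fun v ↦ log (v / c) / 2) c :=
      ((continuousAt_id.div_const c).log (by simp [hc.ne'])).div_const 2
    have hV := (show IsLocalMax (fun s ↦ V (c * exp (2 * s))) (log (c / c) / 2) by
      simpa [hc.ne'] using h).comp_continuous (g := fun v ↦ log (v / c) / 2) hlog
    refine (hV.congr ?_).on (Ioi 0)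
    filter_upwards [Ioi_mem_nhds hc] with v (hv : 0 < v)
    simp [mul_div_cancel₀ _ (two_ne_zero' ℝ), exp_log (div_pos hv hc), mul_div_cancel₀ _ hc.ne']

noncomputable def collarVolume (A t : ℝ) : ℝ := A / 4 * (2 * t + sinh (2 * t))

noncomputable def modifiedCollarVolume (A t : ℝ) : ℝ := A / 4 * (1 + cosh (2 * t))

theorem hasDerivAt_collarVolume (A t : ℝ) :
    HasDerivAt (collarVolume A) (2 * modifiedCollarVolume A t) t := by
  refine ((((hasDerivAt_id t).const_mul 2).add
    ((hasDerivAt_id t).const_mul 2).sinh).const_mul (A / 4)).congr_deriv ?_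
  simp only [modifiedCollarVolume, id]
  ring

theorem monotoneOn_modifiedCollarVolume {A : ℝ} (hA : 0 ≤ A) :
    MonotoneOn (modifiedCollarVolume A) (Ici 0) := by
  intro s (hs : 0 ≤ s) t (ht : 0 ≤ t) hst
  have : cosh (2 * s) ≤ cosh (2 * t) := by
    rw [cosh_le_cosh, abs_of_nonneg (by positivity), abs_of_nonneg (by positivity)]
    linarith
  unfold modifiedCollarVolume
  gcongr

section PeripheralVolume

variable (c A₂ A₃ d₂ d₃ : ℝ)

noncomputable def peripheralVolumeBelow (s : ℝ) : ℝ :=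
  c * exp (2 * s) + collarVolume A₂ (d₂ - s) + collarVolume A₃ (d₃ + s)

noncomputable def peripheralVolumeAbove (s : ℝ) : ℝ :=
  c * exp (2 * s) + collarVolume A₂ (d₂ - s) + collarVolume A₃ (d₃ - s)

theorem hasDerivAt_peripheralVolumeBelow (s : ℝ) :
    HasDerivAt (peripheralVolumeBelow c A₂ A₃ d₂ d₃)
      (2 * (c * exp (2 * s) - modifiedCollarVolume A₂ (d₂ - s)
        + modifiedCollarVolume A₃ (d₃ + s))) s := by
  refine (((((hasDerivAt_id s).const_mul 2).exp.const_mul c).add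
    ((hasDerivAt_collarVolume A₂ (d₂ - s)).comp s ((hasDerivAt_id s).const_sub d₂))).add
    ((hasDerivAt_collarVolume A₃ (d₃ + s)).comp s
      ((hasDerivAt_id s).const_add d₃))).congr_deriv ?_
  simp only [id]
  ring

theorem hasDerivAt_peripheralVolumeAbove (s : ℝ) :
    HasDerivAt (peripheralVolumeAbove c A₂ A₃ d₂ d₃)
      (2 * (c * exp (2 * s) - modifiedCollarVolume A₂ (d₂ - s)
        - modifiedCollarVolume A₃ (d₃ - s))) s := by
  refine (((((hasDerivAt_id s).const_mul 2).exp.const_mul c).add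
    ((hasDerivAt_collarVolume A₂ (d₂ - s)).comp s ((hasDerivAt_id s).const_sub d₂))).add
    ((hasDerivAt_collarVolume A₃ (d₃ - s)).comp s
      ((hasDerivAt_id s).const_sub d₃))).congr_deriv ?_
  simp only [id]
  ring

variable {c A₂ A₃ d₂ d₃}

theorem strictConvexOn_peripheralVolumeBelow (hc : 0 < c) (hA₂ : 0 ≤ A₂) (hA₃ : 0 ≤ A₃)
    (hd₂ : 0 ≤ d₂) : StrictConvexOn ℝ (Icc (-d₃) 0) (peripheralVolumeBelow c A₂ A₃ d₂ d₃) := by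
  refine strictConvexOn_of_hasDerivAt (convex_Icc _ _)
    (hasDerivAt_peripheralVolumeBelow c A₂ A₃ d₂ d₃) ?_
  intro s ⟨hs, _⟩ t ⟨_, ht⟩ hst
  have hexp : c * exp (2 * s) < c * exp (2 * t) := by gcongr
  have h₂ := monotoneOn_modifiedCollarVolume hA₂ (show 0 ≤ d₂ - t by linarith)
    (show 0 ≤ d₂ - s by linarith) (by linarith)
  have h₃ := monotoneOn_modifiedCollarVolume hA₃ (show 0 ≤ d₃ + s by linarith)
    (show 0 ≤ d₃ + t by linarith) (by linarith)
  dsimp only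
  linarith

theorem strictConvexOn_peripheralVolumeAbove (hc : 0 < c) (hA₂ : 0 ≤ A₂) (hA₃ : 0 ≤ A₃) :
    StrictConvexOn ℝ (Icc 0 (min d₂ d₃)) (peripheralVolumeAbove c A₂ A₃ d₂ d₃) := by
  refine strictConvexOn_of_hasDerivAt (convex_Icc _ _)
    (hasDerivAt_peripheralVolumeAbove c A₂ A₃ d₂ d₃) ?_
  intro s ⟨hs, _⟩ t ⟨_, ht⟩ hst
  have hexp : c * exp (2 * s) < c * exp (2 * t) := by gcongr
  have h₂ := monotoneOn_modifiedCollarVolume hA₂ (show 0 ≤ d₂ - t by linarith [min_le_left d₂ d₃])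
    (show 0 ≤ d₂ - s by linarith [min_le_left d₂ d₃]) (by linarith)
  have h₃ := monotoneOn_modifiedCollarVolume hA₃ (show 0 ≤ d₃ - t by linarith [min_le_right d₂ d₃])
    (show 0 ≤ d₃ - s by linarith [min_le_right d₂ d₃]) (by linarith)
  dsimp only
  linarith

end PeripheralVolume

theorem neg_half_log_two_mul_exp_div {B : ℝ} (hB : B ≠ 0) (d s : ℝ) :
    -(1 / 2) * log (2 * (B / 2 * exp (-2 * d) * exp (2 * s)) / B) = d - s := by
  rw [show 2 * (B / 2 * exp (-2 * d) * exp (2 * s)) / B = exp (2 * (s - d)) by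
    rw [mul_sub, sub_eq_add_neg, exp_add]; field_simp, log_exp]
  ring

theorem caseIII_localMax_iff_triangular_general (A₂ A₃ B₂ B₃ d₂ d₃ v₁ vt₂ vt₃ : ℝ)
    (hA₂ : 0 < A₂) (hA₃ : 0 < A₃) (hB₂ : 0 < B₂) (hB₃ : 0 < B₃)
    (hd₂ : 0 < d₂) (hd₃ : 0 < d₃)
    (hv₁₂ : v₁ = B₂ / 2 * Real.exp (-2 * d₂))
    (hv₁₃ : v₁ = B₃ / 2 * Real.exp (-2 * d₃))
    (f₂ f₃ dd₂ dd₃ : ℝ → ℝ)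
    (hf₂ : ∀ t, f₂ t = A₂ / 4 * (2 * t + Real.sinh (2 * t)))
    (hf₃ : ∀ t, f₃ t = A₃ / 4 * (2 * t + Real.sinh (2 * t)))
    (hdd₂ : ∀ v, dd₂ v = -(1 / 2) * Real.log (2 * v / B₂))
    (hdd₃ : ∀ v, dd₃ v = -(1 / 2) * Real.log (2 * v / B₃))
    (hvt₂ : vt₂ = A₂ / 4 * (1 + Real.cosh (2 * d₂)))
    (hvt₃ : vt₃ = A₃ / 4 * (1 + Real.cosh (2 * d₃)))
    (V : ℝ → ℝ)
    (hVle : ∀ v, 0 < v → v ≤ v₁ → V v = v + f₂ (dd₂ v) + f₃ (d₃ + d₂ - dd₂ v))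
    (hVge : ∀ v, v₁ ≤ v → V v = v + f₂ (dd₂ v) + f₃ (dd₃ v)) :
    IsLocalMaxOn V (Set.Ioi (0 : ℝ)) v₁ ↔ (vt₂ - vt₃ < v₁ ∧ v₁ < vt₂ + vt₃) := by
  have hv₁ : 0 < v₁ := by rw [hv₁₂]; positivity
  have hwidth₂ (s : ℝ) : dd₂ (v₁ * exp (2 * s)) = d₂ - s := by
    rw [hdd₂, hv₁₂, neg_half_log_two_mul_exp_div hB₂.ne']
  have hwidth₃ (s : ℝ) : dd₃ (v₁ * exp (2 * s)) = d₃ - s := by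
    rw [hdd₃, hv₁₃, neg_half_log_two_mul_exp_div hB₃.ne']
  have hbelow : EqOn (fun s ↦ V (v₁ * exp (2 * s))) (peripheralVolumeBelow v₁ A₂ A₃ d₂ d₃)
      (Icc (-d₃) 0) := by
    rintro s ⟨-, hs⟩
    dsimp only
    rw [hVle _ (by positivity) (mul_le_of_le_one_right hv₁.le (exp_le_one_iff.2 (by linarith))),
      hwidth₂, show d₃ + d₂ - (d₂ - s) = d₃ + s by ring, hf₂, hf₃]
    rfl
  have habove : EqOn (fun s ↦ V (v₁ * exp (2 * s))) (peripheralVolumeAbove v₁ A₂ A₃ d₂ d₃)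
      (Icc 0 (min d₂ d₃)) := by
    rintro s ⟨hs, -⟩
    dsimp only
    rw [hVge _ (le_mul_of_one_le_right hv₁.le (one_le_exp (by linarith))), hwidth₂, hwidth₃,
      hf₂, hf₃]
    rfl
  rw [isLocalMaxOn_Ioi_iff_isLocalMax_mul_exp hv₁,
    isLocalMax_iff_of_strictConvexOn_Icc (neg_neg_of_pos hd₃) (lt_min hd₂ hd₃)
      (strictConvexOn_peripheralVolumeBelow hv₁ hA₂.le hA₃.le hd₂.le)
      (strictConvexOn_peripheralVolumeAbove hv₁ hA₂.le hA₃.le) hbelow habove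
      (hasDerivAt_peripheralVolumeBelow _ _ _ _ _ 0) (hasDerivAt_peripheralVolumeAbove _ _ _ _ _ 0)]
  simp only [mul_zero, exp_zero, mul_one, sub_zero, add_zero, modifiedCollarVolume, ← hvt₂, ← hvt₃]
  constructor <;> rintro ⟨h₁, h₂⟩ <;> constructor <;> linarith

/-- Case III of the main theorem (one cusp and two boundary components): the total
peripheral volume `V` has a local maximum at `v₁⁰` (among positive parameters) iff the
strict triangular inequalities `vt₂⁰ − vt₃⁰ < v₁⁰ < vt₂⁰ + vt₃⁰` hold. -/
theorem caseIII_localMax_iff_triangular (A₂ A₃ B₂ B₃ d₂ d₃ v₁ vt₂ vt₃ : ℝ)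
    (hA₂ : 0 < A₂) (hA₃ : 0 < A₃) (hB₂ : 0 < B₂) (hB₃ : 0 < B₃)
    (hd₂ : 0 < d₂) (hd₃ : 0 < d₃)
    (hv₁₂ : v₁ = B₂ / 2 * Real.exp (-2 * d₂))
    (hv₁₃ : v₁ = B₃ / 2 * Real.exp (-2 * d₃))
    (f₂ f₃ dd₂ dd₃ : ℝ → ℝ)
    (hf₂ : ∀ t, f₂ t = A₂ / 4 * (2 * t + Real.sinh (2 * t)))
    (hf₃ : ∀ t, f₃ t = A₃ / 4 * (2 * t + Real.sinh (2 * t)))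
    (hdd₂ : ∀ v, dd₂ v = -(1 / 2) * Real.log (2 * v / B₂))
    (hdd₃ : ∀ v, dd₃ v = -(1 / 2) * Real.log (2 * v / B₃))
    (hvt₂ : vt₂ = A₂ / 4 * (1 + Real.cosh (2 * d₂)))
    (hvt₃ : vt₃ = A₃ / 4 * (1 + Real.cosh (2 * d₃)))
    (hord : vt₃ ≤ vt₂)
    (V : ℝ → ℝ)
    (hVle : ∀ v, 0 < v → v ≤ v₁ → V v = v + f₂ (dd₂ v) + f₃ (d₃ + d₂ - dd₂ v))
    (hVge : ∀ v, v₁ ≤ v → V v = v + f₂ (dd₂ v) + f₃ (dd₃ v)) :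
    IsLocalMaxOn V (Set.Ioi (0 : ℝ)) v₁ ↔ (vt₂ - vt₃ < v₁ ∧ v₁ < vt₂ + vt₃) :=
  caseIII_localMax_iff_triangular_general A₂ A₃ B₂ B₃ d₂ d₃ v₁ vt₂ vt₃ hA₂ hA₃ hB₂ hB₃ hd₂ hd₃ hv₁₂
    hv₁₃ f₂ f₃ dd₂ dd₃ hf₂ hf₃ hdd₂ hdd₃ hvt₂ hvt₃ V hVle hVge
end

section
/- Let A₁, A₂, A₃ > 0 and d₁⁰, d₂⁰, d₃⁰ > 0 be reals, define f_j(t) = (A_j/4)·(2t + sinh(2t)) and ṽ_j⁰ = (A_j/4)·(1 + cosh(2d_j⁰)) for j = 1, 2, 3, and assume ṽ₂⁰ ≥ ṽ₃⁰. Define V : ℝ → ℝ by V(d₁) = f₁(d₁) + f₂(d₂⁰ + d₁⁰ − d₁) + f₃(d₃⁰ − d₁⁰ + d₁) for d₁ ≤ d₁⁰, and V(d₁) = f₁(d₁) + f₂(d₂⁰ + d₁⁰ − d₁) + f₃(d₃⁰ + d₁⁰ − d₁) for d₁ ≥ d₁⁰. Then V has a local maximum at d₁⁰ if and only if the strict triangular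 inequalities ṽ₂⁰ − ṽ₃⁰ < ṽ₁⁰ < ṽ₂⁰ + ṽ₃⁰ hold. -/
/-!
On each side of `d₁⁰` the volume `V` is a smooth branch, a sum of collar volumes of widths moving
linearly in `d₁`. Since the derivative of a collar volume is twice the modified volume and `cosh`
increases on `[0, ∞)`, both branches have strictly increasing derivatives near `d₁⁰`; their
derivatives at `d₁⁰` are `2 (ṽ₁⁰ - ṽ₂⁰ + ṽ₃⁰)` on the left and `2 (ṽ₁⁰ - ṽ₂⁰ - ṽ₃⁰)` on the right.
For such a strictly convex branch, `d₁⁰` is a one-sided local maximum exactly when the one-sided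
derivative points strictly away from it: a vanishing derivative is not enough, because convexity
then pushes the branch above its value at `d₁⁰`.
-/

open Real Set Filter Topology

section OneSided

variable {g g' : ℝ → ℝ} {a b c L : ℝ}

theorem HasDerivAt.eventually_nhdsLT_lt_s13 (hg : HasDerivAt g L a) (hL : 0 < L) :
    ∀ᶠ x in 𝓝[<] a, g x < g a := by
  filter_upwards [(hasDerivAt_iff_tendsto_slope_left_right.1 hg).1.eventually
    (eventually_gt_nhds hL), self_mem_nhdsWithin] with x hslope hx
  exact (slope_pos_iff_gt hx).1 hslope

theorem HasDerivAt.eventually_nhdsGT_lt_s13 (hg : HasDerivAt g L a) (hL : L < 0) :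
    ∀ᶠ x in 𝓝[>] a, g x < g a := by
  filter_upwards [(hasDerivAt_iff_tendsto_slope_left_right.1 hg).2.eventually
    (eventually_lt_nhds hL), self_mem_nhdsWithin] with x hslope hx
  exact (slope_neg_iff_of_le (le_of_lt hx)).1 hslope

theorem strictAntiOn_Icc_of_strictMonoOn_deriv_of_nonpos
    (hg : ∀ x ∈ Icc b a, HasDerivAt g (g' x) x) (hg' : StrictMonoOn g' (Icc b a))
    (ha : g' a ≤ 0) : StrictAntiOn g (Icc b a) := by
  refine strictAntiOn_of_deriv_neg (convex_Icc b a)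
    (fun x hx => (hg x hx).continuousAt.continuousWithinAt) fun x hx => ?_
  rw [interior_Icc] at hx
  rw [(hg x (Ioo_subset_Icc_self hx)).deriv]
  exact (hg' (Ioo_subset_Icc_self hx) (right_mem_Icc.2 (hx.1.trans hx.2).le) hx.2).trans_le ha

theorem strictMonoOn_Icc_of_strictMonoOn_deriv_of_nonneg
    (hg : ∀ x ∈ Icc a c, HasDerivAt g (g' x) x) (hg' : StrictMonoOn g' (Icc a c))
    (ha : 0 ≤ g' a) : StrictMonoOn g (Icc a c) := by
  refine strictMonoOn_of_deriv_pos (convex_Icc a c)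
    (fun x hx => (hg x hx).continuousAt.continuousWithinAt) fun x hx => ?_
  rw [interior_Icc] at hx
  rw [(hg x (Ioo_subset_Icc_self hx)).deriv]
  exact ha.trans_lt (hg' (left_mem_Icc.2 (hx.1.trans hx.2).le) (Ioo_subset_Icc_self hx) hx.1)

theorem eventually_nhdsLT_le_iff_of_strictMonoOn_deriv (hba : b < a)
    (hg : ∀ x ∈ Icc b a, HasDerivAt g (g' x) x) (hg' : StrictMonoOn g' (Icc b a)) :
    (∀ᶠ x in 𝓝[<] a, g x ≤ g a) ↔ 0 < g' a := by
  refine ⟨fun h => ?_, fun ha => ?_⟩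
  · by_contra! ha
    obtain ⟨x, hle, hx⟩ := (h.and (Ico_mem_nhdsLT hba)).exists
    exact (strictAntiOn_Icc_of_strictMonoOn_deriv_of_nonpos hg hg' ha ⟨hx.1, hx.2.le⟩
      (right_mem_Icc.2 hba.le) hx.2).not_ge hle
  · exact ((hg a (right_mem_Icc.2 hba.le)).eventually_nhdsLT_lt_s13 ha).mono fun _ => le_of_lt

theorem eventually_nhdsGT_le_iff_of_strictMonoOn_deriv (hac : a < c)
    (hg : ∀ x ∈ Icc a c, HasDerivAt g (g' x) x) (hg' : StrictMonoOn g' (Icc a c)) :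
    (∀ᶠ x in 𝓝[>] a, g x ≤ g a) ↔ g' a < 0 := by
  refine ⟨fun h => ?_, fun ha => ?_⟩
  · by_contra! ha
    obtain ⟨x, hle, hx⟩ := (h.and (Ioc_mem_nhdsGT hac)).exists
    exact (strictMonoOn_Icc_of_strictMonoOn_deriv_of_nonneg hg hg' ha
      (left_mem_Icc.2 hac.le) ⟨hx.1.le, hx.2⟩ hx.1).not_ge hle
  · exact ((hg a (left_mem_Icc.2 hac.le)).eventually_nhdsGT_lt_s13 ha).mono fun _ => le_of_lt

end OneSided

theorem isLocalMax_iff_eventually_nhdsLT_and_nhdsGT {f : ℝ → ℝ} {a : ℝ} :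
    IsLocalMax f a ↔ (∀ᶠ x in 𝓝[<] a, f x ≤ f a) ∧ ∀ᶠ x in 𝓝[>] a, f x ≤ f a := by
  rw [IsLocalMax, IsMaxFilter, ← nhdsNE_sup_pure, ← nhdsLT_sup_nhdsGT, eventually_sup,
    eventually_sup, eventually_pure, and_iff_left le_rfl]

theorem isLocalMax_glued_iff {V gL gR gL' gR' : ℝ → ℝ} {a b c : ℝ} (hba : b < a) (hac : a < c)
    (hVL : ∀ x ≤ a, V x = gL x) (hVR : ∀ x ≥ a, V x = gR x)
    (hgL : ∀ x ∈ Icc b a, HasDerivAt gL (gL' x) x) (hgL' : StrictMonoOn gL' (Icc b a))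
    (hgR : ∀ x ∈ Icc a c, HasDerivAt gR (gR' x) x) (hgR' : StrictMonoOn gR' (Icc a c)) :
    IsLocalMax V a ↔ 0 < gL' a ∧ gR' a < 0 := by
  have hL : (∀ᶠ x in 𝓝[<] a, V x ≤ V a) ↔ ∀ᶠ x in 𝓝[<] a, gL x ≤ gL a := by
    refine eventually_congr (eventually_nhdsWithin_of_forall fun x hx => ?_)
    rw [hVL x (le_of_lt hx), hVL a le_rfl]
  have hR : (∀ᶠ x in 𝓝[>] a, V x ≤ V a) ↔ ∀ᶠ x in 𝓝[>] a, gR x ≤ gR a := by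
    refine eventually_congr (eventually_nhdsWithin_of_forall fun x hx => ?_)
    rw [hVR x (le_of_lt hx), hVR a le_rfl]
  rw [isLocalMax_iff_eventually_nhdsLT_and_nhdsGT, hL, hR,
    eventually_nhdsLT_le_iff_of_strictMonoOn_deriv hba hgL hgL',
    eventually_nhdsGT_le_iff_of_strictMonoOn_deriv hac hgR hgR']

theorem strictMonoOn_modifiedCollarVolume {A : ℝ} (hA : 0 < A) :
    StrictMonoOn (modifiedCollarVolume A) (Ici 0) := fun s hs t ht hst => by
  have : cosh (2 * s) < cosh (2 * t) :=
    cosh_strictMonoOn (by simpa using hs) (by simpa using ht) (by linarith)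
  unfold modifiedCollarVolume
  gcongr

theorem hasDerivAt_collarVolume_add_sub_add (A₁ A₂ A₃ p q x : ℝ) :
    HasDerivAt (fun x => collarVolume A₁ x + collarVolume A₂ (p - x) + collarVolume A₃ (q + x))
      (2 * modifiedCollarVolume A₁ x - 2 * modifiedCollarVolume A₂ (p - x)
        + 2 * modifiedCollarVolume A₃ (q + x)) x := by
  simpa only [← sub_eq_add_neg] using ((hasDerivAt_collarVolume A₁ x).fun_add
    ((hasDerivAt_collarVolume A₂ (p - x)).comp_const_sub p x)).fun_add
    ((hasDerivAt_collarVolume A₃ (q + x)).comp_const_add q x)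

theorem hasDerivAt_collarVolume_add_sub_sub (A₁ A₂ A₃ p r x : ℝ) :
    HasDerivAt (fun x => collarVolume A₁ x + collarVolume A₂ (p - x) + collarVolume A₃ (r - x))
      (2 * modifiedCollarVolume A₁ x - 2 * modifiedCollarVolume A₂ (p - x)
        - 2 * modifiedCollarVolume A₃ (r - x)) x := by
  simpa only [← sub_eq_add_neg] using ((hasDerivAt_collarVolume A₁ x).fun_add
    ((hasDerivAt_collarVolume A₂ (p - x)).comp_const_sub p x)).fun_add
    ((hasDerivAt_collarVolume A₃ (r - x)).comp_const_sub r x)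

theorem strictMonoOn_modifiedCollarVolume_add_sub_add {A₁ A₂ A₃ : ℝ}
    (hA₁ : 0 < A₁) (hA₂ : 0 < A₂) (hA₃ : 0 < A₃)
    {p q a b : ℝ} (hb : 0 ≤ b) (hap : a ≤ p) (hqb : 0 ≤ q + b) :
    StrictMonoOn (fun x => 2 * modifiedCollarVolume A₁ x - 2 * modifiedCollarVolume A₂ (p - x)
      + 2 * modifiedCollarVolume A₃ (q + x)) (Icc b a) := by
  intro x hx y hy hxy
  have h₁ := strictMonoOn_modifiedCollarVolume hA₁ (mem_Ici.2 (hb.trans hx.1))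
    (mem_Ici.2 (hb.trans hy.1)) hxy
  have h₂ := strictMonoOn_modifiedCollarVolume hA₂ (mem_Ici.2 (by linarith [hy.2] : 0 ≤ p - y))
    (mem_Ici.2 (by linarith [hx.2] : 0 ≤ p - x)) (by linarith : p - y < p - x)
  have h₃ := strictMonoOn_modifiedCollarVolume hA₃ (mem_Ici.2 (by linarith [hx.1] : 0 ≤ q + x))
    (mem_Ici.2 (by linarith [hy.1] : 0 ≤ q + y)) (by linarith : q + x < q + y)
  dsimp only
  linarith

theorem strictMonoOn_modifiedCollarVolume_add_sub_sub {A₁ A₂ A₃ : ℝ}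
    (hA₁ : 0 < A₁) (hA₂ : 0 < A₂) (hA₃ : 0 < A₃)
    {p r a c : ℝ} (ha : 0 ≤ a) (hcp : c ≤ p) (hcr : c ≤ r) :
    StrictMonoOn (fun x => 2 * modifiedCollarVolume A₁ x - 2 * modifiedCollarVolume A₂ (p - x)
      - 2 * modifiedCollarVolume A₃ (r - x)) (Icc a c) := by
  intro x hx y hy hxy
  have h₁ := strictMonoOn_modifiedCollarVolume hA₁ (mem_Ici.2 (ha.trans hx.1))
    (mem_Ici.2 (ha.trans hy.1)) hxy
  have h₂ := strictMonoOn_modifiedCollarVolume hA₂ (mem_Ici.2 (by linarith [hy.2] : 0 ≤ p - y))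
    (mem_Ici.2 (by linarith [hx.2] : 0 ≤ p - x)) (by linarith : p - y < p - x)
  have h₃ := strictMonoOn_modifiedCollarVolume hA₃ (mem_Ici.2 (by linarith [hy.2] : 0 ≤ r - y))
    (mem_Ici.2 (by linarith [hx.2] : 0 ≤ r - x)) (by linarith : r - y < r - x)
  dsimp only
  linarith

theorem caseIV_localMax_iff_triangular_general (A₁ A₂ A₃ d₁ d₂ d₃ vt₁ vt₂ vt₃ : ℝ)
    (hA₁ : 0 < A₁) (hA₂ : 0 < A₂) (hA₃ : 0 < A₃)
    (hd₁ : 0 < d₁) (hd₂ : 0 < d₂) (hd₃ : 0 < d₃)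
    (f₁ f₂ f₃ : ℝ → ℝ)
    (hf₁ : ∀ t, f₁ t = A₁ / 4 * (2 * t + Real.sinh (2 * t)))
    (hf₂ : ∀ t, f₂ t = A₂ / 4 * (2 * t + Real.sinh (2 * t)))
    (hf₃ : ∀ t, f₃ t = A₃ / 4 * (2 * t + Real.sinh (2 * t)))
    (hvt₁ : vt₁ = A₁ / 4 * (1 + Real.cosh (2 * d₁)))
    (hvt₂ : vt₂ = A₂ / 4 * (1 + Real.cosh (2 * d₂)))
    (hvt₃ : vt₃ = A₃ / 4 * (1 + Real.cosh (2 * d₃)))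
    (V : ℝ → ℝ)
    (hVle : ∀ d ≤ d₁, V d = f₁ d + f₂ (d₂ + d₁ - d) + f₃ (d₃ - d₁ + d))
    (hVge : ∀ d ≥ d₁, V d = f₁ d + f₂ (d₂ + d₁ - d) + f₃ (d₃ + d₁ - d)) :
    IsLocalMax V d₁ ↔ (vt₂ - vt₃ < vt₁ ∧ vt₁ < vt₂ + vt₃) := by
  obtain rfl : f₁ = collarVolume A₁ := funext hf₁
  obtain rfl : f₂ = collarVolume A₂ := funext hf₂
  obtain rfl : f₃ = collarVolume A₃ := funext hf₃
  obtain rfl : vt₁ = modifiedCollarVolume A₁ d₁ := hvt₁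
  obtain rfl : vt₂ = modifiedCollarVolume A₂ d₂ := hvt₂
  obtain rfl : vt₃ = modifiedCollarVolume A₃ d₃ := hvt₃
  have hδL := lt_min hd₁ hd₃
  have hδR := lt_min hd₂ hd₃
  rw [isLocalMax_glued_iff (b := d₁ - min d₁ d₃) (c := d₁ + min d₂ d₃) (by linarith)
    (by linarith) hVle hVge (fun x _ => hasDerivAt_collarVolume_add_sub_add A₁ A₂ A₃ _ _ x)
    (strictMonoOn_modifiedCollarVolume_add_sub_add hA₁ hA₂ hA₃
      (by linarith [min_le_left d₁ d₃]) (by linarith) (by linarith [min_le_right d₁ d₃]))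
    (fun x _ => hasDerivAt_collarVolume_add_sub_sub A₁ A₂ A₃ _ _ x)
    (strictMonoOn_modifiedCollarVolume_add_sub_sub hA₁ hA₂ hA₃ hd₁.le
      (by linarith [min_le_left d₂ d₃]) (by linarith [min_le_right d₂ d₃]))]
  simp only [add_sub_cancel_right, sub_add_cancel]
  constructor <;> rintro ⟨h₁, h₂⟩ <;> constructor <;> linarith

/-- Case IV of the main theorem (three boundary components): the total peripheral volume
`V` has a local maximum at `d₁⁰` iff the strict triangular inequalities
`vt₂⁰ − vt₃⁰ < vt₁⁰ < vt₂⁰ + vt₃⁰` hold. -/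
theorem caseIV_localMax_iff_triangular (A₁ A₂ A₃ d₁ d₂ d₃ vt₁ vt₂ vt₃ : ℝ)
    (hA₁ : 0 < A₁) (hA₂ : 0 < A₂) (hA₃ : 0 < A₃)
    (hd₁ : 0 < d₁) (hd₂ : 0 < d₂) (hd₃ : 0 < d₃)
    (f₁ f₂ f₃ : ℝ → ℝ)
    (hf₁ : ∀ t, f₁ t = A₁ / 4 * (2 * t + Real.sinh (2 * t)))
    (hf₂ : ∀ t, f₂ t = A₂ / 4 * (2 * t + Real.sinh (2 * t)))
    (hf₃ : ∀ t, f₃ t = A₃ / 4 * (2 * t + Real.sinh (2 * t)))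
    (hvt₁ : vt₁ = A₁ / 4 * (1 + Real.cosh (2 * d₁)))
    (hvt₂ : vt₂ = A₂ / 4 * (1 + Real.cosh (2 * d₂)))
    (hvt₃ : vt₃ = A₃ / 4 * (1 + Real.cosh (2 * d₃)))
    (hord : vt₃ ≤ vt₂)
    (V : ℝ → ℝ)
    (hVle : ∀ d ≤ d₁, V d = f₁ d + f₂ (d₂ + d₁ - d) + f₃ (d₃ - d₁ + d))
    (hVge : ∀ d ≥ d₁, V d = f₁ d + f₂ (d₂ + d₁ - d) + f₃ (d₃ + d₁ - d)) :
    IsLocalMax V d₁ ↔ (vt₂ - vt₃ < vt₁ ∧ vt₁ < vt₂ + vt₃) :=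
  caseIV_localMax_iff_triangular_general A₁ A₂ A₃ d₁ d₂ d₃ vt₁ vt₂ vt₃ hA₁ hA₂ hA₃ hd₁ hd₂ hd₃ f₁ f₂
    f₃ hf₁ hf₂ hf₃ hvt₁ hvt₂ hvt₃ V hVle hVge
end
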